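/- For every integer n ≥ 1 and all i, j ∈ {1, …, n}, the number of Dyck paths of semilength n whose first peak has height i and whose last peak has height j equals the (i,j)-entry c^{(n)}_{i,j} of the matrix C_n; that is, |D_n(i,j)| = c^{(n)}_{i,j}. -/

import Mathlib

/-- A Dyck word: a list of booleans (`true` = rise, `false` = fall) with equally many
rises and falls such that every prefix has at least as many rises as falls. -/
def IsDyckWord (w : List Bool) : Prop :=
  w.count true = w.count false ∧ ∀ p, p <+: w → p.count false ≤ p.count true

/-- The list of heights of the peaks (occurrences of the factor `rf`) of a word,
from left to right. The height of a peak is the number of rises minus the number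
of falls in the prefix ending with the rise of that peak. -/
def peakHeights (w : List Bool) : List ℕ :=
  (List.range w.length).filterMap (fun k =>
    if w[k]? = some true ∧ w[k + 1]? = some false then
      some ((w.take (k + 1)).count true - (w.take (k + 1)).count false)
    else none)

/-- `DyckD n i j` is the set of Dyck paths of semilength `n` whose first peak has
height `i` and whose last peak has height `j`. -/
def DyckD (n i j : ℕ) : Set (List Bool) :=
  {w | IsDyckWord w ∧ w.count true = n ∧
    (peakHeights w).head? = some i ∧ (peakHeights w).getLast? = some j}
/-- The entries `c^{(n)}_{i,j}` of the matrices `C_n`, defined by `C_1 = (1)` and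
`C_{n+1} = (τ C_n) ⊕ (1)`, where `(τ A)_{i,j} = Σ_{s=i-1}^{n} a_{s,j}` (with the
convention `a_{0,j} = 0`). Entries with an index outside `{1, …, n}` are `0`. -/
def cMat : ℕ → ℕ → ℕ → ℕ
  | 0, _, _ => 0
  | 1, i, j => if i = 1 ∧ j = 1 then 1 else 0
  | n + 2, i, j =>
      if 1 ≤ i ∧ i ≤ n + 1 ∧ 1 ≤ j ∧ j ≤ n + 1 then
        ∑ s ∈ Finset.Icc (i - 1) (n + 1), cMat (n + 1) s j
      else if i = n + 2 ∧ j = n + 2 then 1 else 0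

/-! Both sides satisfy the same recursion in `n`. For `1 ≤ i ≤ n`, putting a peak of height `i`
in front of a path of `D_n(s, j)` with `s ≥ i - 1`, so that the ascent of the new peak absorbs
the first `i - 1` rises of the old path, is a bijection from `⋃_{s ≥ i - 1} D_n(s, j)` onto
`D_{n+1}(i, j)`: it keeps the last peak, and its inverse deletes the first peak. This is the rule
`C_{n+1} = τ C_n` on the top-left block. A peak of height `n + 1` forces the path
`r^{n+1} f^{n+1}`, which accounts for the corner entry `1` and the zeros beside it. -/

open List

theorem forall_prefix_cons {α : Type*} {a : α} {l : List α} {P : List α → Prop} :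
    (∀ p, p <+: a :: l → P p) ↔ P [] ∧ ∀ p, p <+: l → P (a :: p) := by
  simp only [prefix_cons_iff, or_imp, forall_and, forall_eq, forall_exists_index, and_imp]
  rw [forall_comm]
  simp only [forall_eq]

theorem exists_eq_replicate_true_append_false {w : List Bool} (h : false ∈ w) :
    ∃ a u, w = replicate a true ++ false :: u := by
  induction w with
  | nil => simp at h
  | cons b v ih =>
    cases b
    · exact ⟨0, v, rfl⟩
    · obtain ⟨a, u, rfl⟩ := ih (by simpa using h)
      exact ⟨a + 1, u, rfl⟩

theorem eq_replicate_false_of_count_true_eq_zero {u : List Bool} (h : u.count true = 0) :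
    u = replicate (u.count false) false := by
  rw [eq_replicate_iff, ← count_true_add_count_false, h, zero_add]
  exact ⟨rfl, fun b hb => by cases b <;> simp_all [← count_pos_iff]⟩

def NonnegFrom (t f : ℕ) (w : List Bool) : Prop :=
  ∀ p, p <+: w → f + p.count false ≤ t + p.count true

section NonnegFrom

variable {t f : ℕ} {w : List Bool}

theorem NonnegFrom.le (h : NonnegFrom t f w) : f ≤ t := by
  simpa using h [] nil_prefix

theorem nonnegFrom_cons_true : NonnegFrom t f (true :: w) ↔ f ≤ t ∧ NonnegFrom (t + 1) f w := by
  simp only [NonnegFrom, forall_prefix_cons, count_nil, count_cons_self,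
    count_cons_of_ne, ne_eq, Bool.true_eq_false, not_false_eq_true, add_zero]
  exact and_congr_right fun _ => forall₂_congr fun _ _ => by omega

theorem nonnegFrom_cons_false : NonnegFrom t f (false :: w) ↔ NonnegFrom t (f + 1) w := by
  simp only [NonnegFrom, forall_prefix_cons, count_nil, count_cons_self,
    count_cons_of_ne, ne_eq, Bool.false_eq_true, not_false_eq_true, add_zero]
  refine ⟨fun h p hp => (h.2 p hp).trans_eq' (by omega), fun h => ⟨?_, fun p hp => ?_⟩⟩
  · have := h [] nil_prefix
    simp only [count_nil] at this
    omega
  · exact (h p hp).trans_eq' (by omega)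

theorem nonnegFrom_succ_succ : NonnegFrom (t + 1) (f + 1) w ↔ NonnegFrom t f w :=
  forall₂_congr fun _ _ => by omega

theorem nonnegFrom_replicate_true_append {s : ℕ} :
    NonnegFrom t f (replicate s true ++ w) ↔ f ≤ t ∧ NonnegFrom (t + s) f w := by
  induction s generalizing t with
  | zero => exact ⟨fun h => ⟨h.le, h⟩, And.right⟩
  | succ s ih =>
    rw [replicate_succ, cons_append, nonnegFrom_cons_true, ih, add_right_comm, add_assoc]
    exact ⟨fun ⟨h, _, hw⟩ => ⟨h, hw⟩, fun ⟨h, hw⟩ => ⟨h, by omega, hw⟩⟩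

theorem nonnegFrom_replicate_false {c : ℕ} : NonnegFrom t f (replicate c false) ↔ f + c ≤ t := by
  induction c generalizing f with
  | zero => exact ⟨NonnegFrom.le, fun h p hp => by simp_all [prefix_nil.1 hp]⟩
  | succ c ih => rw [replicate_succ, nonnegFrom_cons_false, ih, add_right_comm, add_assoc]

theorem nonnegFrom_zero_zero_replicate_true_append_false {s : ℕ} :
    NonnegFrom 0 0 (replicate s true ++ false :: w) ↔ NonnegFrom s 1 w := by
  rw [nonnegFrom_replicate_true_append, nonnegFrom_cons_false, zero_add, zero_add]
  exact and_iff_right le_rfl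

end NonnegFrom

theorem isDyckWord_iff {w : List Bool} :
    IsDyckWord w ↔ w.count true = w.count false ∧ NonnegFrom 0 0 w := by
  simp [IsDyckWord, NonnegFrom]

/-- The peak heights of `w`, read after a prefix with `t` rises and `f` falls. -/
def peaksFrom : ℕ → ℕ → List Bool → List ℕ
  | _, _, [] => []
  | t, f, true :: w => (if w.head? = some false then [t + 1 - f] else []) ++ peaksFrom (t + 1) f w
  | t, f, false :: w => peaksFrom t (f + 1) w

theorem filterMap_peaks_eq_peaksFrom (w : List Bool) (t f : ℕ) :
    (range w.length).filterMap (fun k =>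
      if w[k]? = some true ∧ w[k + 1]? = some false then
        some (t + (w.take (k + 1)).count true - (f + (w.take (k + 1)).count false))
      else none) = peaksFrom t f w := by
  induction w generalizing t f with
  | nil => rfl
  | cons b v ih =>
    rw [length_cons, range_succ_eq_map, filterMap_cons, filterMap_map]
    cases b <;> by_cases hv : v[0]? = some false <;>
      simp [peaksFrom, ← ih, head?_eq_getElem?, hv, ← add_assoc, add_right_comm _ 1]

theorem peakHeights_eq_peaksFrom (w : List Bool) : peakHeights w = peaksFrom 0 0 w := by
  rw [← filterMap_peaks_eq_peaksFrom]
  simp only [peakHeights, zero_add]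

section peaksFrom

variable {t f : ℕ} {w : List Bool}

theorem peaksFrom_succ_succ : peaksFrom (t + 1) (f + 1) w = peaksFrom t f w := by
  induction w generalizing t f with
  | nil => rfl
  | cons b v ih => cases b <;> simp [peaksFrom, ih]

theorem peaksFrom_replicate_false (c : ℕ) : peaksFrom t f (replicate c false) = [] := by
  induction c generalizing f with
  | zero => rfl
  | succ c ih => exact ih

theorem peaksFrom_replicate_true_append_false {s : ℕ} (hs : 1 ≤ s) :
    peaksFrom t f (replicate s true ++ false :: w) = (t + s - f) :: peaksFrom (t + s) (f + 1) w := by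
  induction s, hs using Nat.le_induction generalizing t with
  | base => simp [peaksFrom]
  | succ s hs ih =>
    obtain ⟨s, rfl⟩ := Nat.exists_eq_add_of_le' hs
    rw [replicate_succ, cons_append, peaksFrom, ih, if_neg (by simp [replicate_succ]), nil_append,
      add_right_comm t 1, add_assoc]

theorem exists_eq_replicate_of_peaksFrom_eq_nil (h : peaksFrom t f w = []) :
    ∃ c d, w = replicate c false ++ replicate d true := by
  induction w generalizing t f with
  | nil => exact ⟨0, 0, rfl⟩
  | cons b v ih =>
    cases b
    · obtain ⟨c, d, rfl⟩ := ih h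
      exact ⟨c + 1, d, rfl⟩
    · obtain ⟨hhead, hv⟩ := append_eq_nil_iff.1 h
      obtain ⟨c, d, rfl⟩ := ih hv
      rcases c with _ | c
      · exact ⟨0, d + 1, rfl⟩
      · simp [replicate_succ] at hhead

theorem peaksFrom_ne_nil (h : NonnegFrom t f w) (hlt : t < f + w.count false) :
    peaksFrom t f w ≠ [] := by
  intro hnil
  obtain ⟨c, d, rfl⟩ := exists_eq_replicate_of_peaksFrom_eq_nil hnil
  have := h _ (prefix_append _ _)
  simp only [count_replicate_self, count_replicate, beq_true, Bool.false_eq_true, ↓reduceIte,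
    add_zero, count_append, beq_false, Bool.not_true] at this hlt
  omega

theorem mem_peaksFrom {x : ℕ} (h : NonnegFrom t f w) (hx : x ∈ peaksFrom t f w) :
    1 ≤ x ∧ x + f ≤ t + w.count true := by
  induction w generalizing t f with
  | nil => simp [peaksFrom] at hx
  | cons b v ih =>
    cases b
    · rw [nonnegFrom_cons_false] at h
      have := ih h hx
      simp only [count_cons]
      omega
    · rw [nonnegFrom_cons_true] at h
      simp only [peaksFrom, mem_append] at hx
      simp only [count_cons_self]
      rcases hx with hx | hx
      · split_ifs at hx
        · rw [mem_singleton] at hx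
          omega
        · exact absurd hx not_mem_nil
      · have := ih h.2 hx
        omega

end peaksFrom

section DyckD

variable {n i j : ℕ} {u w : List Bool}

theorem replicate_append_mem_DyckD_iff :
    replicate i true ++ false :: u ∈ DyckD n i j ↔ i + u.count true = n ∧
      1 + u.count false = n ∧ NonnegFrom i 1 u ∧ (i :: peaksFrom i 1 u).getLast? = some j := by
  rcases Nat.eq_zero_or_pos i with rfl | hi
  · have h0 : ¬ NonnegFrom 0 1 u := fun h => absurd h.le (by omega)
    refine iff_of_false (fun h => h0 ?_) (fun h => h0 h.2.2.1)
    exact nonnegFrom_zero_zero_replicate_true_append_false.1 (isDyckWord_iff.1 h.1).2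
  · simp only [DyckD, isDyckWord_iff, peakHeights_eq_peaksFrom, Set.mem_ofPred_eq, count_append,
      count_replicate_self, ne_eq, Bool.false_eq_true, not_false_eq_true, count_cons_of_ne,
      count_replicate, beq_false, Bool.not_true, ↓reduceIte, count_cons_self, zero_add,
      nonnegFrom_zero_zero_replicate_true_append_false, peaksFrom_replicate_true_append_false hi,
      tsub_zero, head?_cons, true_and]
    exact ⟨fun ⟨⟨h1, h2⟩, h3, h4⟩ => ⟨h3, by omega, h2, h4⟩,
      fun ⟨h3, h1, h2, h4⟩ => ⟨⟨by omega, h2⟩, h3, h4⟩⟩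

theorem exists_eq_replicate_of_mem_DyckD (h : w ∈ DyckD n i j) :
    ∃ u, w = replicate i true ++ false :: u := by
  obtain ⟨hD, -, hhead, -⟩ := h
  obtain ⟨hbal, hnonneg⟩ := isDyckWord_iff.1 hD
  have hfalse : false ∈ w := by
    by_contra hw
    obtain rfl : w = [] := by
      rw [← length_eq_zero_iff, ← count_true_add_count_false, hbal, count_eq_zero.2 hw]
    simp [peakHeights] at hhead
  obtain ⟨a, u, rfl⟩ := exists_eq_replicate_true_append_false hfalse
  rw [nonnegFrom_zero_zero_replicate_true_append_false] at hnonneg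
  rw [peakHeights_eq_peaksFrom, peaksFrom_replicate_true_append_false hnonneg.le] at hhead
  obtain rfl : a = i := by simpa using hhead
  exact ⟨u, rfl⟩

theorem DyckD_finite (n i j : ℕ) : (DyckD n i j).Finite :=
  (finite_length_eq Bool (2 * n)).subset fun w ⟨⟨hbal, _⟩, hn, _⟩ => by
    rw [Set.mem_ofPred_eq, ← count_true_add_count_false]
    omega

theorem DyckD_zero : DyckD 0 i j = ∅ :=
  Set.eq_empty_of_forall_notMem fun w hw => by
    obtain ⟨u, rfl⟩ := exists_eq_replicate_of_mem_DyckD hw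
    have := (replicate_append_mem_DyckD_iff.1 hw).2.1
    omega

theorem bounds_of_mem_DyckD (h : w ∈ DyckD n i j) : 1 ≤ i ∧ i ≤ n ∧ 1 ≤ j ∧ j ≤ n := by
  obtain ⟨u, rfl⟩ := exists_eq_replicate_of_mem_DyckD h
  obtain ⟨hn, -, hnonneg, hlast⟩ := replicate_append_mem_DyckD_iff.1 h
  have hi := hnonneg.le
  rcases mem_cons.1 (mem_of_getLast? hlast) with rfl | hj
  · omega
  · have := mem_peaksFrom hnonneg hj
    omega

theorem first_eq_iff_last_eq_of_mem_DyckD (h : w ∈ DyckD n i j) : i = n ↔ j = n := by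
  obtain ⟨u, rfl⟩ := exists_eq_replicate_of_mem_DyckD h
  obtain ⟨hn, -, hnonneg, hlast⟩ := replicate_append_mem_DyckD_iff.1 h
  rcases mem_cons.1 (mem_of_getLast? hlast) with rfl | hj
  · rfl
  · have hjn := mem_peaksFrom hnonneg hj
    refine iff_of_false (fun hin => ?_) (by omega)
    rw [eq_replicate_false_of_count_true_eq_zero (u := u) (by omega), peaksFrom_replicate_false] at hj
    exact not_mem_nil hj

theorem DyckD_self_self (n : ℕ) :
    DyckD (n + 1) (n + 1) (n + 1) = {replicate (n + 1) true ++ false :: replicate n false} := by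
  ext w
  rw [Set.mem_singleton_iff]
  constructor
  · intro h
    obtain ⟨u, rfl⟩ := exists_eq_replicate_of_mem_DyckD h
    obtain ⟨hn, hn', -⟩ := replicate_append_mem_DyckD_iff.1 h
    rw [eq_replicate_false_of_count_true_eq_zero (by omega : u.count true = 0)]
    congr 3
    omega
  · rintro rfl
    rw [replicate_append_mem_DyckD_iff, nonnegFrom_replicate_false, peaksFrom_replicate_false]
    refine ⟨by simp [count_replicate], by simp [add_comm], by omega, rfl⟩

end DyckD

/-- The ascent of the new peak absorbs the first `i - 1` rises of `p`. -/
def prependPeak (i : ℕ) (p : List Bool) : List Bool :=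
  replicate i true ++ false :: p.drop (i - 1)

section prependPeak

variable {m i j s a : ℕ} {u : List Bool}

theorem prependPeak_replicate_true_append_false (hi : 1 ≤ i) (ha : i + a = s + 1) :
    prependPeak i (replicate s true ++ false :: u) =
      replicate i true ++ false :: (replicate a true ++ false :: u) := by
  rw [prependPeak, drop_append_of_le_length (by rw [length_replicate]; omega), drop_replicate,
    show s - (i - 1) = a by omega]

theorem injOn_prependPeak :
    Set.InjOn (prependPeak i) {p | p.take (i - 1) = replicate (i - 1) true} := by
  intro p hp q hq hpq
  rw [← take_append_drop (i - 1) p, ← take_append_drop (i - 1) q, hp.out, hq.out]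
  simpa [prependPeak] using hpq

theorem take_eq_replicate_of_mem_DyckD {p : List Bool} (hp : p ∈ DyckD m s j) {k : ℕ}
    (hk : k ≤ s) : p.take k = replicate k true := by
  obtain ⟨u, rfl⟩ := exists_eq_replicate_of_mem_DyckD hp
  rw [take_append_of_le_length (by rwa [length_replicate]), take_replicate, min_eq_left hk]

theorem getLast?_peaksFrom_replicate_true_append_false (him : i ≤ m) (ha : i + a = s + 1)
    (hu : NonnegFrom s 1 u) (hm : 1 + u.count false = m) :
    (i :: peaksFrom i 1 (replicate a true ++ false :: u)).getLast? =
      (s :: peaksFrom s 1 u).getLast? := by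
  rcases Nat.eq_zero_or_pos a with rfl | ha'
  · obtain rfl : i = s + 1 := by omega
    rw [replicate_zero, nil_append, peaksFrom, peaksFrom_succ_succ,
      getLast?_cons_of_ne_nil (peaksFrom_ne_nil hu (by omega)),
      getLast?_cons_of_ne_nil (peaksFrom_ne_nil hu (by omega))]
  · rw [peaksFrom_replicate_true_append_false ha', ha, peaksFrom_succ_succ, getLast?_cons_cons,
      Nat.add_sub_cancel]

theorem replicate_append_mem_DyckD_succ_iff (hi : 1 ≤ i) (him : i ≤ m) (ha : i + a = s + 1) :
    replicate i true ++ false :: (replicate a true ++ false :: u) ∈ DyckD (m + 1) i j ↔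
      replicate s true ++ false :: u ∈ DyckD m s j := by
  have hnonneg : NonnegFrom i 1 (replicate a true ++ false :: u) ↔ NonnegFrom s 1 u := by
    rw [nonnegFrom_replicate_true_append, nonnegFrom_cons_false, ha, nonnegFrom_succ_succ]
    exact and_iff_right hi
  rw [replicate_append_mem_DyckD_iff, replicate_append_mem_DyckD_iff, hnonneg]
  simp only [count_append, count_replicate_self, count_cons_self, count_replicate,
    count_cons_of_ne, ne_eq, Bool.false_eq_true, not_false_eq_true, beq_false, Bool.not_true,
    ↓reduceIte]
  refine ⟨fun ⟨h1, h2, h3, h4⟩ => ?_, fun ⟨h1, h2, h3, h4⟩ => ?_⟩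
  · have hm : 1 + u.count false = m := by omega
    exact ⟨by omega, hm, h3, getLast?_peaksFrom_replicate_true_append_false him ha h3 hm ▸ h4⟩
  · exact ⟨by omega, by omega, h3, getLast?_peaksFrom_replicate_true_append_false him ha h3 h2 ▸ h4⟩

theorem DyckD_succ_eq_image (hi : 1 ≤ i) (him : i ≤ m) :
    DyckD (m + 1) i j = prependPeak i '' ⋃ s ∈ Set.Icc (i - 1) m, DyckD m s j := by
  ext q
  simp only [Set.mem_image, Set.mem_iUnion, Set.mem_Icc, exists_prop]
  constructor
  · intro hq
    obtain ⟨w, rfl⟩ := exists_eq_replicate_of_mem_DyckD hq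
    have hfalse : false ∈ w := by
      have := (replicate_append_mem_DyckD_iff.1 hq).2.1
      exact count_pos_iff.1 (by omega)
    obtain ⟨a, u, rfl⟩ := exists_eq_replicate_true_append_false hfalse
    have hp := (replicate_append_mem_DyckD_succ_iff hi him (s := i + a - 1) (by omega)).1 hq
    exact ⟨_, ⟨_, ⟨by omega, (bounds_of_mem_DyckD hp).2.1⟩, hp⟩,
      prependPeak_replicate_true_append_false hi (by omega)⟩
  · rintro ⟨p, ⟨s, ⟨his, -⟩, hp⟩, rfl⟩
    obtain ⟨u, rfl⟩ := exists_eq_replicate_of_mem_DyckD hp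
    rw [prependPeak_replicate_true_append_false hi (a := s + 1 - i) (by omega)]
    exact (replicate_append_mem_DyckD_succ_iff hi him (by omega)).2 hp

theorem ncard_DyckD_succ_of_le (hi : 1 ≤ i) (him : i ≤ m) :
    (DyckD (m + 1) i j).ncard = ∑ s ∈ Finset.Icc (i - 1) m, (DyckD m s j).ncard := by
  have hinj : Set.InjOn (prependPeak i) (⋃ s ∈ Set.Icc (i - 1) m, DyckD m s j) :=
    injOn_prependPeak.mono <| Set.iUnion₂_subset fun s hs p hp =>
      take_eq_replicate_of_mem_DyckD hp hs.1
  have hdisj : (Set.Icc (i - 1) m).PairwiseDisjoint fun s => DyckD m s j :=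
    fun s _ s' _ hss' => Set.disjoint_left.2 fun p hp hp' =>
      hss' (Option.some_inj.1 (hp.2.2.1.symm.trans hp'.2.2.1))
  rw [DyckD_succ_eq_image hi him, hinj.ncard_image,
    (Set.finite_Icc _ _).ncard_biUnion (fun s _ => DyckD_finite m s j) hdisj, ← Finset.coe_Icc,
    finsum_mem_coe_finset]

end prependPeak

theorem ncard_DyckD_succ (m i j : ℕ) :
    (DyckD (m + 1) i j).ncard =
      if 1 ≤ i ∧ i ≤ m ∧ 1 ≤ j ∧ j ≤ m then ∑ s ∈ Finset.Icc (i - 1) m, (DyckD m s j).ncard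
      else if i = m + 1 ∧ j = m + 1 then 1 else 0 := by
  split_ifs with hrec hdiag
  · exact ncard_DyckD_succ_of_le hrec.1 hrec.2.1
  · rw [hdiag.1, hdiag.2, DyckD_self_self, Set.ncard_singleton]
  · suffices DyckD (m + 1) i j = ∅ by rw [this, Set.ncard_empty]
    refine Set.eq_empty_of_forall_notMem fun w hw => ?_
    have := bounds_of_mem_DyckD hw
    have := first_eq_iff_last_eq_of_mem_DyckD hw
    omega

theorem cMat_succ (m i j : ℕ) :
    cMat (m + 1) i j =
      if 1 ≤ i ∧ i ≤ m ∧ 1 ≤ j ∧ j ≤ m then ∑ s ∈ Finset.Icc (i - 1) m, cMat m s j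
      else if i = m + 1 ∧ j = m + 1 then 1 else 0 := by
  rcases m with _ | m
  · simp only [cMat]
    split_ifs <;> omega
  · rfl

theorem dyck_count_eq_cMat (n : ℕ) (i j : ℕ) :
    (DyckD n i j).ncard = cMat n i j := by
  induction n generalizing i j with
  | zero => rw [DyckD_zero, Set.ncard_empty, cMat]
  | succ m ih => simp only [ncard_DyckD_succ, cMat_succ, ih]
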